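/- For all n ≥ 1, Σ_{σ ∈ Av_n(231,321)} q^{inv σ} = (1+q)^{n-1}, where Av_n(231,321) is the set of permutations of {1,…,n} avoiding both the patterns 231 and 321. -/

import Mathlib

open scoped Classical

/-- `σ` contains the pattern `π`. -/
def permContains {n k : ℕ} (σ : Equiv.Perm (Fin n)) (π : Equiv.Perm (Fin k)) : Prop :=
  ∃ f : Fin k → Fin n, StrictMono f ∧ ∀ i j : Fin k, π i < π j ↔ σ (f i) < σ (f j)

/-- `σ` avoids the pattern `π`. -/
def permAvoids {n k : ℕ} (σ : Equiv.Perm (Fin n)) (π : Equiv.Perm (Fin k)) : Prop :=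
  ¬ permContains σ π

def p123 : Equiv.Perm (Fin 3) := 1
def p132 : Equiv.Perm (Fin 3) := Equiv.swap 1 2
def p213 : Equiv.Perm (Fin 3) := Equiv.swap 0 1
def p231 : Equiv.Perm (Fin 3) := finRotate 3
def p312 : Equiv.Perm (Fin 3) := (finRotate 3)⁻¹
def p321 : Equiv.Perm (Fin 3) := Equiv.swap 0 2

/-- Descent set of a permutation, as a set of (1-based) positions `i` with `a_i > a_{i+1}`. -/
def desSet {n : ℕ} (σ : Equiv.Perm (Fin n)) : Finset ℕ :=
  (Finset.Ico 1 n).filter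
    (fun i => ∀ h : i < n, σ ⟨i, h⟩ < σ ⟨i - 1, Nat.lt_of_le_of_lt (Nat.sub_le i 1) h⟩)

/-- Major index: sum of descent positions. -/
def majIdx {n : ℕ} (σ : Equiv.Perm (Fin n)) : ℕ := ∑ i ∈ desSet σ, i

/-- Number of descents. -/
def desNum {n : ℕ} (σ : Equiv.Perm (Fin n)) : ℕ := (desSet σ).card

/-- Number of inversions. -/
def invNum {n : ℕ} (σ : Equiv.Perm (Fin n)) : ℕ :=
  ((Finset.univ : Finset (Fin n × Fin n)).filter (fun p => p.1 < p.2 ∧ σ p.2 < σ p.1)).card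

/-!
A permutation avoids both 231 and 321 exactly when every entry is preceded by at most one larger
entry. Remove the smallest letter, say at position `p`: since every letter to its left is larger,
this removes exactly `p` inversions, and it leaves the property intact; conversely the property
forces `p ≤ 1`. Thus each letter after the first contributes a factor `1 + q`.
-/

open Equiv Equiv.Perm Finset

section
variable {n : ℕ}

theorem permContains_iff_exists_strictMono {k : ℕ} (σ : Perm (Fin n)) (π : Perm (Fin k)) :
    permContains σ π ↔ ∃ f : Fin k → Fin n, StrictMono f ∧ StrictMono (σ ∘ f ∘ π.symm) := by
  refine exists_congr fun f => and_congr_right fun _ => ⟨fun h a b hab => ?_, fun h i j => ?_⟩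
  · exact (h _ _).1 (by simpa using hab)
  · simpa using (h.lt_iff_lt (a := π i) (b := π j)).symm

theorem permContains_fin_three_iff (σ : Perm (Fin n)) (π : Perm (Fin 3)) :
    permContains σ π ↔
      ∃ i j k, i < j ∧ j < k ∧ StrictMono (![σ i, σ j, σ k] ∘ π.symm) := by
  rw [permContains_iff_exists_strictMono]
  constructor
  · rintro ⟨f, hf, h⟩
    have hσf : σ ∘ f = ![σ (f 0), σ (f 1), σ (f 2)] := by funext a; fin_cases a <;> rfl
    rw [← Function.comp_assoc, hσf] at h
    exact ⟨f 0, f 1, f 2, hf (by decide), hf (by decide), h⟩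
  · rintro ⟨i, j, k, hij, hjk, h⟩
    refine ⟨![i, j, k], Fin.strictMono_iff_lt_succ.2 fun a => ?_, ?_⟩
    · fin_cases a
      exacts [hij, hjk]
    · have hσf : σ ∘ ![i, j, k] = ![σ i, σ j, σ k] := by funext a; fin_cases a <;> rfl
      rwa [← Function.comp_assoc, hσf]

theorem permContains_p231_iff (σ : Perm (Fin n)) :
    permContains σ p231 ↔ ∃ i j k, i < j ∧ j < k ∧ σ k < σ i ∧ σ i < σ j := by
  have h0 : p231.symm 0 = 2 := by decide
  have h1 : p231.symm 1 = 0 := by decide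
  have h2 : p231.symm 2 = 1 := by decide
  simp [permContains_fin_three_iff, Fin.strictMono_iff_lt_succ, Fin.forall_fin_two, h0, h1, h2]

theorem permContains_p321_iff (σ : Perm (Fin n)) :
    permContains σ p321 ↔ ∃ i j k, i < j ∧ j < k ∧ σ k < σ j ∧ σ j < σ i := by
  have h0 : p321.symm 0 = 2 := by decide
  have h1 : p321.symm 1 = 1 := by decide
  have h2 : p321.symm 2 = 0 := by decide
  simp [permContains_fin_three_iff, Fin.strictMono_iff_lt_succ, Fin.forall_fin_two, h0, h1, h2]

def largerLeft (σ : Perm (Fin n)) (k : Fin n) : Finset (Fin n) := {i | i < k ∧ σ k < σ i}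

theorem one_lt_card_largerLeft_iff (σ : Perm (Fin n)) (k : Fin n) :
    1 < #(largerLeft σ k) ↔ ∃ i j, i < j ∧ j < k ∧ σ k < σ i ∧ σ k < σ j := by
  simp only [one_lt_card_iff, largerLeft, mem_filter, mem_univ, true_and]
  constructor
  · rintro ⟨a, b, ha, hb, hab⟩
    rcases hab.lt_or_gt with h | h
    exacts [⟨a, b, h, hb.1, ha.2, hb.2⟩, ⟨b, a, h, ha.1, hb.2, ha.2⟩]
  · rintro ⟨i, j, hij, hjk, hi, hj⟩
    exact ⟨i, j, ⟨hij.trans hjk, hi⟩, ⟨hjk, hj⟩, hij.ne⟩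

theorem permAvoids_p231_and_p321_iff (σ : Perm (Fin n)) :
    permAvoids σ p231 ∧ permAvoids σ p321 ↔ ∀ k, #(largerLeft σ k) ≤ 1 := by
  rw [permAvoids, permAvoids, ← not_or, ← not_iff_not, not_not]
  simp only [not_forall, not_le, one_lt_card_largerLeft_iff, permContains_p231_iff,
    permContains_p321_iff]
  constructor
  · rintro (⟨i, j, k, hij, hjk, h1, h2⟩ | ⟨i, j, k, hij, hjk, h1, h2⟩)
    exacts [⟨k, i, j, hij, hjk, h1, h1.trans h2⟩, ⟨k, i, j, hij, hjk, h1.trans h2, h1⟩]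
  · rintro ⟨k, i, j, hij, hjk, hi, hj⟩
    rcases lt_or_gt_of_ne (σ.injective.ne hij.ne) with h | h
    exacts [Or.inl ⟨i, j, k, hij, hjk, hi, h⟩, Or.inr ⟨i, j, k, hij, hjk, hj, h⟩]

theorem invNum_eq_sum_card_largerLeft (σ : Perm (Fin n)) :
    invNum σ = ∑ k, #(largerLeft σ k) := by
  simp only [invNum, largerLeft, card_filter, Fintype.sum_prod_type_right]

/-- In one-line notation: the letters of `σ` shifted up by one, with a new smallest letter
`0` inserted at position `p`. -/
def insertMin (p : Fin (n + 1)) (σ : Perm (Fin n)) : Perm (Fin (n + 1)) :=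
  decomposeFin.symm (0, σ) * p.cycleRange

@[simp]
theorem insertMin_apply_self (p : Fin (n + 1)) (σ : Perm (Fin n)) : insertMin p σ p = 0 := by
  simp [insertMin, decomposeFin_symm_apply_zero]

@[simp]
theorem insertMin_apply_succAbove (p : Fin (n + 1)) (σ : Perm (Fin n)) (i : Fin n) :
    insertMin p σ (p.succAbove i) = (σ i).succ := by
  simp [insertMin, decomposeFin_symm_apply_succ]

theorem insertMin_inv_apply_zero (p : Fin (n + 1)) (σ : Perm (Fin n)) :
    (insertMin p σ)⁻¹ 0 = p :=
  (Perm.inv_eq_iff_eq).2 (insertMin_apply_self p σ).symm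

def insertMinEquiv : Fin (n + 1) × Perm (Fin n) ≃ Perm (Fin (n + 1)) where
  toFun x := insertMin x.1 x.2
  invFun τ := (τ⁻¹ 0, (decomposeFin (τ * (τ⁻¹ 0).cycleRange⁻¹)).2)
  left_inv := fun ⟨p, σ⟩ => by
    dsimp only
    rw [insertMin_inv_apply_zero, insertMin, mul_inv_cancel_right, apply_symm_apply]
  right_inv τ := by
    set ρ := τ * (τ⁻¹ 0).cycleRange⁻¹
    have hρ : decomposeFin ρ = (0, (decomposeFin ρ).2) := by
      refine Prod.ext ?_ rfl
      calc (decomposeFin ρ).1 = decomposeFin.symm (decomposeFin ρ) 0 :=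
            (decomposeFin_symm_apply_zero _ _).symm
        _ = 0 := by
          rw [symm_apply_apply, Perm.mul_apply, Perm.inv_def, Fin.cycleRange_symm_zero]
          exact τ.apply_symm_apply 0
    change decomposeFin.symm (0, (decomposeFin ρ).2) * _ = τ
    rw [← hρ, symm_apply_apply, inv_mul_cancel_right]

@[simp]
theorem insertMinEquiv_apply (x : Fin (n + 1) × Perm (Fin n)) :
    insertMinEquiv x = insertMin x.1 x.2 :=
  rfl

theorem largerLeft_insertMin_self (p : Fin (n + 1)) (σ : Perm (Fin n)) :
    largerLeft (insertMin p σ) p = Iio p := by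
  ext i
  simp only [largerLeft, mem_filter, mem_univ, true_and, mem_Iio, insertMin_apply_self,
    and_iff_left_iff_imp, Fin.pos_iff_ne_zero, ne_eq]
  intro hi h0
  rw [← insertMin_apply_self p σ, (insertMin p σ).injective.eq_iff] at h0
  exact hi.ne h0

theorem largerLeft_insertMin_succAbove (p : Fin (n + 1)) (σ : Perm (Fin n)) (k : Fin n) :
    largerLeft (insertMin p σ) (p.succAbove k) = (largerLeft σ k).map p.succAboveEmb := by
  ext i
  obtain rfl | ⟨j, rfl⟩ := p.eq_self_or_eq_succAbove i
  · simp [largerLeft, Fin.succAbove_ne]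
  · simp [largerLeft, Fin.succAbove_lt_succAbove_iff]

theorem invNum_insertMin (p : Fin (n + 1)) (σ : Perm (Fin n)) :
    invNum (insertMin p σ) = p + invNum σ := by
  simp only [invNum_eq_sum_card_largerLeft, Fin.sum_univ_succAbove _ p,
    largerLeft_insertMin_self, Fin.card_Iio, largerLeft_insertMin_succAbove, card_map]

theorem card_largerLeft_insertMin_le_one_iff (p : Fin (n + 1)) (σ : Perm (Fin n)) :
    (∀ k, #(largerLeft (insertMin p σ) k) ≤ 1) ↔ (p : ℕ) ≤ 1 ∧ ∀ k, #(largerLeft σ k) ≤ 1 := by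
  simp only [Fin.forall_iff_succAbove p, largerLeft_insertMin_self, Fin.card_Iio,
    largerLeft_insertMin_succAbove, card_map]

end

section
variable {R : Type*} [CommSemiring R]

theorem sum_filter_card_largerLeft_le_one_succ (q : R) (n : ℕ) :
    ∑ τ ∈ univ.filter (fun τ : Perm (Fin (n + 1)) => ∀ k, #(largerLeft τ k) ≤ 1), q ^ invNum τ =
      (∑ p ∈ univ.filter (fun p : Fin (n + 1) => (p : ℕ) ≤ 1), q ^ (p : ℕ)) *
        ∑ σ ∈ univ.filter (fun σ : Perm (Fin n) => ∀ k, #(largerLeft σ k) ≤ 1), q ^ invNum σ := by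
  rw [sum_filter, ← insertMinEquiv.sum_comp, Fintype.sum_prod_type, sum_filter, sum_mul]
  refine sum_congr rfl fun p _ => ?_
  rw [sum_filter, mul_sum]
  refine sum_congr rfl fun σ _ => ?_
  simp only [insertMinEquiv_apply, card_largerLeft_insertMin_le_one_iff, invNum_insertMin, pow_add, ite_and]
  split_ifs <;> simp

theorem sum_filter_val_le_one_pow (q : R) (n : ℕ) :
    ∑ p ∈ univ.filter (fun p : Fin (n + 2) => (p : ℕ) ≤ 1), q ^ (p : ℕ) = 1 + q := by
  rw [sum_filter, Fin.sum_univ_succ, Fin.sum_univ_succ]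
  simp

theorem sum_filter_card_largerLeft_le_one (q : R) (n : ℕ) :
    ∑ σ ∈ univ.filter (fun σ : Perm (Fin (n + 1)) => ∀ k, #(largerLeft σ k) ≤ 1), q ^ invNum σ =
      (1 + q) ^ n := by
  induction n with
  | zero => rw [sum_filter_card_largerLeft_le_one_succ]; simp [invNum]
  | succ n ih =>
    rw [sum_filter_card_largerLeft_le_one_succ, ih, sum_filter_val_le_one_pow, pow_succ']

end

theorem inv_231_321 (n : ℕ) (hn : 1 ≤ n) (q : ℚ) :
    ∑ σ ∈ Finset.univ.filter
        (fun σ : Equiv.Perm (Fin n) => permAvoids σ p231 ∧ permAvoids σ p321),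
      q ^ invNum σ = (1 + q) ^ (n - 1) := by
  obtain ⟨m, rfl⟩ := Nat.exists_eq_add_of_le' hn
  rw [filter_congr fun σ _ => permAvoids_p231_and_p321_iff σ, Nat.add_sub_cancel]
  exact sum_filter_card_largerLeft_le_one q m
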